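/- Let A(t) be an n×l real matrix function of class C¹ on [a,b] with l ≤ n, and set B(t) = A(t)ᵀA(t). Suppose det B(t) ≠ 0 for t ∈ (a,b), det B(a) = 0, det B(b) ≠ 0, and there exists h_a > 0 with det B(a+t) = h_a² t² + o(t²) as t → 0+. Fix α > 0, γ > 0, κ > 0. Then there exists λ > 0, depending only on A, α, γ and κ, such that for every continuous ℝˡ-valued function r on [a,b] satisfying ‖r‖_{i,a,b} ≥ α‖r‖_{a,b} and |A(t)r(t)| ≤ κ(t−a)‖r‖_{a,b} for t ∈ [a, a+γ), one has ‖Ar‖_{i,a,b} ≥ λ‖r‖_{i,a,b}. -/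

import Mathlib

/-!
For `t ∈ [c, b]` with `c > a` we have `det (A tᵀ A t) ≠ 0`, so `A t` is injective and, by
compactness of `[c, b] × sphere`, `|A(t) v| ≥ m |v|` there. Taking `c - a ≤ α / 2`, the part of
`‖r‖_{i,a,b}` coming from `[a, c]` is at most `(c - a) ‖r‖_{a,b} ≤ ‖r‖_{i,a,b} / 2`, hence
`‖A r‖_{i,a,b} ≥ m ∫_c^b |r| ≥ (m / 2) ‖r‖_{i,a,b}`.
-/

open Set Filter Asymptotics Topology MeasureTheory Matrix

/-- Euclidean norm of a vector in `ℝˡ`. -/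
noncomputable def euclNorm {l : ℕ} (v : Fin l → ℝ) : ℝ := Real.sqrt (∑ i, v i ^ 2)

/-- `‖q‖_{a,b} = max_{t ∈ [a,b]} |q(t)|`. -/
noncomputable def supNorm {l : ℕ} (a b : ℝ) (q : ℝ → Fin l → ℝ) : ℝ :=
  sSup ((fun t => euclNorm (q t)) '' Set.Icc a b)

/-- `‖q‖_{i,a,b} = ∫_a^b |q(t)| dt`. -/
noncomputable def intNorm {l : ℕ} (a b : ℝ) (q : ℝ → Fin l → ℝ) : ℝ :=
  ∫ t in a..b, euclNorm (q t)

theorem IsCompact.exists_pos_mul_norm_le_norm_of_injective {X E F : Type*} [TopologicalSpace X]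
    [NormedAddCommGroup E] [NormedSpace ℝ E] [FiniteDimensional ℝ E]
    [NormedAddCommGroup F] [NormedSpace ℝ F] {s : Set X} (hs : IsCompact s)
    (T : X → E →ₗ[ℝ] F) (hT : ContinuousOn (fun p : X × E => T p.1 p.2) (s ×ˢ univ))
    (hinj : ∀ x ∈ s, Function.Injective (T x)) :
    ∃ m > 0, ∀ x ∈ s, ∀ v, m * ‖v‖ ≤ ‖T x v‖ := by
  have hK : IsCompact (s ×ˢ Metric.sphere (0 : E) 1) := hs.prod (isCompact_sphere 0 1)
  have hpos : ∀ p ∈ s ×ˢ Metric.sphere (0 : E) 1, 0 < ‖T p.1 p.2‖ := by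
    rintro ⟨x, v⟩ ⟨hx, hv⟩
    rw [norm_pos_iff, Ne, ← map_zero (T x), (hinj x hx).eq_iff]
    exact ne_zero_of_mem_unit_sphere ⟨v, hv⟩
  obtain ⟨m, hm, hmK⟩ := hK.exists_forall_le'
    (hT.norm.mono (prod_mono_right (subset_univ _))) hpos
  refine ⟨m, hm, fun x hx v => ?_⟩
  rcases eq_or_ne v 0 with rfl | hv
  · simp
  have hv' : 0 < ‖v‖ := norm_pos_iff.2 hv
  have hunit : ‖(‖v‖⁻¹ • v)‖ = 1 := by rw [norm_smul, norm_inv, norm_norm, inv_mul_cancel₀ hv'.ne']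
  have := hmK (x, ‖v‖⁻¹ • v) ⟨hx, mem_sphere_zero_iff_norm.2 hunit⟩
  rw [map_smul, norm_smul, norm_inv, norm_norm, le_inv_mul_iff₀ hv'] at this
  linarith

lemma euclNorm_eq_norm_toLp {l : ℕ} (v : Fin l → ℝ) :
    euclNorm v = ‖(WithLp.toLp 2 v : EuclideanSpace ℝ (Fin l))‖ := by
  simp [EuclideanSpace.norm_eq, euclNorm, sq_abs]

lemma euclNorm_nonneg {l : ℕ} (v : Fin l → ℝ) : 0 ≤ euclNorm v := Real.sqrt_nonneg _

lemma continuous_euclNorm {l : ℕ} : Continuous (euclNorm (l := l)) := by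
  simpa only [funext euclNorm_eq_norm_toLp] using (PiLp.continuous_toLp 2 _).norm

lemma Matrix.mulVec_injective_of_det_transpose_mul_ne_zero {m n : Type*} [Fintype m]
    [Fintype n] [DecidableEq n] {K : Type*} [Field K] {A : Matrix m n K}
    (h : (Aᵀ * A).det ≠ 0) : Function.Injective A.mulVec := by
  have hAA : Function.Injective (Aᵀ * A).mulVec :=
    mulVec_injective_iff_isUnit.2 ((isUnit_iff_isUnit_det _).2 (isUnit_iff_ne_zero.2 h))
  refine Function.Injective.of_comp (f := Aᵀ.mulVec) ?_
  simpa only [Function.comp_def, mulVec_mulVec] using hAA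

theorem IsCompact.exists_pos_mul_euclNorm_le_euclNorm_mulVec {n l : ℕ} {s : Set ℝ}
    (hs : IsCompact s) {A : ℝ → Matrix (Fin n) (Fin l) ℝ} (hA : ContinuousOn A s)
    (hinj : ∀ t ∈ s, Function.Injective (A t).mulVec) :
    ∃ m > 0, ∀ t ∈ s, ∀ v, m * euclNorm v ≤ euclNorm (A t *ᵥ v) := by
  have hT : ContinuousOn (fun p : ℝ × EuclideanSpace ℝ (Fin l) => toLpLin 2 2 (A p.1) p.2)
      (s ×ˢ univ) :=
    (PiLp.continuous_toLp 2 _).comp_continuousOn <|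
      (continuous_fst.matrix_mulVec continuous_snd).comp_continuousOn <|
        (hA.comp continuousOn_fst fun _ hp => (mem_prod.1 hp).1).prodMk
          ((PiLp.continuous_ofLp 2 _).comp continuous_snd).continuousOn
  obtain ⟨m, hm, hbound⟩ := hs.exists_pos_mul_norm_le_norm_of_injective
      (fun t => toLpLin 2 2 (A t)) hT fun t ht =>
    (WithLp.toLp_injective 2).comp ((hinj t ht).comp (WithLp.ofLp_injective 2))
  refine ⟨m, hm, fun t ht v => ?_⟩
  simpa only [euclNorm_eq_norm_toLp, toLpLin_toLp, toLin'_apply] using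
    hbound t ht (WithLp.toLp 2 v)

theorem intervalIntegral.half_mul_integral_le_integral_of_mul_le_on_tail {f g : ℝ → ℝ}
    {a b c m : ℝ} (hac : a ≤ c) (hcb : c ≤ b) (hf : IntervalIntegrable f volume a b)
    (hg : IntervalIntegrable g volume a b) (hm : 0 ≤ m) (hf0 : ∀ t ∈ Icc a c, 0 ≤ f t)
    (hfg : ∀ t ∈ Icc c b, m * g t ≤ f t)
    (hhead : 2 * ∫ t in a..c, g t ≤ ∫ t in a..b, g t) :
    m / 2 * ∫ t in a..b, g t ≤ ∫ t in a..b, f t := by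
  have hc : c ∈ uIcc a b := by rw [uIcc_of_le (hac.trans hcb)]; exact ⟨hac, hcb⟩
  have hg_tail := hg.mono_set (uIcc_subset_uIcc_right hc)
  have hsplit_f := integral_add_adjacent_intervals (hf.mono_set (uIcc_subset_uIcc_left hc))
    (hf.mono_set (uIcc_subset_uIcc_right hc))
  have hsplit_g := integral_add_adjacent_intervals
    (hg.mono_set (uIcc_subset_uIcc_left hc)) hg_tail
  have hf_head : 0 ≤ ∫ t in a..c, f t := integral_nonneg hac hf0
  have hf_tail : m * ∫ t in c..b, g t ≤ ∫ t in c..b, f t := by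
    rw [← integral_const_mul]
    exact integral_mono_on hcb (hg_tail.const_mul m)
      (hf.mono_set (uIcc_subset_uIcc_right hc)) hfg
  nlinarith [mul_le_mul_of_nonneg_left hhead hm]

lemma euclNorm_le_supNorm {l : ℕ} {a b : ℝ} {r : ℝ → Fin l → ℝ} (hr : ContinuousOn r (Icc a b))
    {t : ℝ} (ht : t ∈ Icc a b) : euclNorm (r t) ≤ supNorm a b r :=
  le_csSup (isCompact_Icc.image_of_continuousOn
    (continuous_euclNorm.comp_continuousOn hr)).bddAbove (mem_image_of_mem _ ht)

lemma integral_euclNorm_le_mul_supNorm {l : ℕ} {a b c : ℝ} {r : ℝ → Fin l → ℝ}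
    (hr : ContinuousOn r (Icc a b)) (hac : a ≤ c) (hcb : c ≤ b) :
    ∫ t in a..c, euclNorm (r t) ≤ (c - a) * supNorm a b r := by
  have hmono := intervalIntegral.integral_mono_on hac
    ((continuous_euclNorm.comp_continuousOn hr).mono (Icc_subset_Icc_right hcb)
      |>.intervalIntegrable_of_Icc hac)
    (intervalIntegrable_const (μ := volume))
    fun t ht => euclNorm_le_supNorm hr (Icc_subset_Icc_right hcb ht)
  simpa using hmono

theorem stmt10_general (n l : ℕ) (a b : ℝ) (hab : a < b)
    (A : ℝ → Matrix (Fin n) (Fin l) ℝ)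
    (hA : ∀ i j, ContDiffOn ℝ 1 (fun t => A t i j) (Set.Icc a b))
    (B : ℝ → Matrix (Fin l) (Fin l) ℝ) (hB : ∀ t, B t = (A t)ᵀ * A t)
    (hdet : ∀ t ∈ Set.Ioo a b, (B t).det ≠ 0)
    (hdetb : (B b).det ≠ 0)
    (α γ κ : ℝ) (hα : 0 < α) :
    ∃ lam > 0, ∀ r : ℝ → Fin l → ℝ, ContinuousOn r (Set.Icc a b) →
      intNorm a b r ≥ α * supNorm a b r →
      (∀ t, a ≤ t → t < a + γ → t ≤ b →
        euclNorm ((A t).mulVec (r t)) ≤ κ * (t - a) * supNorm a b r) →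
      (∫ t in a..b, euclNorm ((A t).mulVec (r t))) ≥ lam * intNorm a b r := by
  set c := a + min ((b - a) / 2) (α / 2)
  have hac : a < c := lt_add_of_pos_right a (lt_min (by linarith) (by linarith))
  have hcb : c ≤ b := by linarith [min_le_left ((b - a) / 2) (α / 2)]
  have hcα : 2 * (c - a) ≤ α := by linarith [min_le_right ((b - a) / 2) (α / 2)]
  have hAcont : ContinuousOn A (Icc a b) :=
    continuousOn_pi.2 fun i => continuousOn_pi.2 fun j => (hA i j).continuousOn
  have hinj : ∀ t ∈ Icc c b, Function.Injective (A t).mulVec := fun t ht =>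
    mulVec_injective_of_det_transpose_mul_ne_zero <| hB t ▸
      (ht.2.eq_or_lt.elim (fun h => h ▸ hdetb) fun h => hdet t ⟨hac.trans_le ht.1, h⟩)
  obtain ⟨m, hm, hAm⟩ := isCompact_Icc.exists_pos_mul_euclNorm_le_euclNorm_mulVec
    (hAcont.mono (Icc_subset_Icc_left hac.le)) hinj
  refine ⟨m / 2, by positivity, fun r hr hint _ => ?_⟩
  have hsup : 0 ≤ supNorm a b r :=
    (euclNorm_nonneg _).trans (euclNorm_le_supNorm hr (left_mem_Icc.2 hab.le))
  have hArc : ContinuousOn (fun t => A t *ᵥ r t) (Icc a b) :=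
    (continuous_fst.matrix_mulVec continuous_snd).comp_continuousOn (hAcont.prodMk hr)
  refine intervalIntegral.half_mul_integral_le_integral_of_mul_le_on_tail hac.le hcb
    ((continuous_euclNorm.comp_continuousOn hArc).intervalIntegrable_of_Icc hab.le)
    ((continuous_euclNorm.comp_continuousOn hr).intervalIntegrable_of_Icc hab.le) hm.le
    (fun t _ => euclNorm_nonneg _) (fun t ht => hAm t ht (r t)) ?_
  rw [intNorm] at hint
  linarith [integral_euclNorm_le_mul_supNorm hr hac.le hcb, mul_le_mul_of_nonneg_right hcα hsup]

theorem stmt10 (n l : ℕ) (hln : l ≤ n) (a b : ℝ) (hab : a < b)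
    (A : ℝ → Matrix (Fin n) (Fin l) ℝ)
    (hA : ∀ i j, ContDiffOn ℝ 1 (fun t => A t i j) (Set.Icc a b))
    (B : ℝ → Matrix (Fin l) (Fin l) ℝ) (hB : ∀ t, B t = (A t)ᵀ * A t)
    (hdet : ∀ t ∈ Set.Ioo a b, (B t).det ≠ 0)
    (hdeta : (B a).det = 0) (hdetb : (B b).det ≠ 0)
    (ha : ℝ) (hha : 0 < ha)
    (hasyma : (fun t => (B (a + t)).det - ha ^ 2 * t ^ 2) =o[𝓝[>] (0 : ℝ)] fun t => t ^ 2)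
    (α γ κ : ℝ) (hα : 0 < α) (hγ : 0 < γ) (hκ : 0 < κ) :
    ∃ lam > 0, ∀ r : ℝ → Fin l → ℝ, ContinuousOn r (Set.Icc a b) →
      intNorm a b r ≥ α * supNorm a b r →
      (∀ t, a ≤ t → t < a + γ → t ≤ b →
        euclNorm ((A t).mulVec (r t)) ≤ κ * (t - a) * supNorm a b r) →
      (∫ t in a..b, euclNorm ((A t).mulVec (r t))) ≥ lam * intNorm a b r :=
  stmt10_general n l a b hab A hA B hB hdet hdetb α γ κ hα
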